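/- arXiv:1010.2333 — 2 statements merged into one kernel-verified Lean document; each statement's English description precedes it below -/
import Mathlib

section
/- Let L be a linear subspace of ℝ^d and let 0 < ε ≤ 1/2. If u, v are unit vectors in ℝ^d with ‖u − v‖ ≤ ε³ and ‖u|L‖ ≥ ε, then ‖v|L‖ ≥ ε/2 (in particular v ∉ L^⊥) and ‖pr_L(u) − pr_L(v)‖ ≤ 3ε. -/
open MeasureTheory Metric Matrix
open scoped RealInnerProductSpace Pointwise

noncomputable section

def frobNorm {d : ℕ} (A : Matrix (Fin d) (Fin d) ℝ) : ℝ :=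
  Real.sqrt (∑ i, ∑ j, (A i j) ^ 2)

def rotDist {d : ℕ} (ρ : Matrix (Fin d) (Fin d) ℝ) : ℝ := frobNorm (ρ - 1)

def IsSO {d : ℕ} (ρ : Matrix (Fin d) (Fin d) ℝ) : Prop := ρᵀ * ρ = 1 ∧ ρ.det = 1

def rotApply {d : ℕ} (ρ : Matrix (Fin d) (Fin d) ℝ) :
    EuclideanSpace ℝ (Fin d) → EuclideanSpace ℝ (Fin d) :=
  Matrix.toEuclideanLin ρ

def projL {d : ℕ} (L : Submodule ℝ (EuclideanSpace ℝ (Fin d)))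
    (x : EuclideanSpace ℝ (Fin d)) : EuclideanSpace ℝ (Fin d) :=
  (L.orthogonalProjection x : EuclideanSpace ℝ (Fin d))

def sphProj {d : ℕ} (L : Submodule ℝ (EuclideanSpace ℝ (Fin d)))
    (x : EuclideanSpace ℝ (Fin d)) : EuclideanSpace ℝ (Fin d) :=
  ‖projL L x‖⁻¹ • projL L x

def projMeasure {d : ℕ} (L : Submodule ℝ (EuclideanSpace ℝ (Fin d)))
    (μ : Measure (EuclideanSpace ℝ (Fin d))) : Measure (EuclideanSpace ℝ (Fin d)) :=
  Measure.map (sphProj L) (μ.withDensity fun u => ENNReal.ofReal ‖projL L u‖)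

def mphi {d : ℕ} (φ : Measure (EuclideanSpace ℝ (Fin d))) : ℝ :=
  sInf ((fun u => ∫ v, |⟪u, v⟫| ∂φ) '' (sphere (0 : EuclideanSpace ℝ (Fin d)) 1))

def suppFn {d : ℕ} (B : Set (EuclideanSpace ℝ (Fin d))) (v : EuclideanSpace ℝ (Fin d)) : ℝ :=
  sSup ((fun y => ⟪y, v⟫) '' B)

def devi {d : ℕ} (L : Submodule ℝ (EuclideanSpace ℝ (Fin d)))
    (K M : Set (EuclideanSpace ℝ (Fin d))) : ℝ :=
  Real.log (sInf {r : ℝ | ∃ α β : ℝ, ∃ z ∈ L, 0 < α ∧ 0 < β ∧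
    α • M ⊆ (fun y => y + z) '' K ∧ (fun y => y + z) '' K ⊆ β • M ∧ r = β / α})

def Delta {d : ℕ} (L E : Submodule ℝ (EuclideanSpace ℝ (Fin d))) : ℝ :=
  sInf (rotDist '' {ρ | IsSO ρ ∧ L.map (Matrix.toEuclideanLin ρ) = E})

/-
The orthogonal projection is `1`-Lipschitz, so `‖u|L - v|L‖ ≤ ε³ ≤ ε / 4`, which keeps
`‖v|L‖ ≥ ε / 2`. Normalization `x ↦ x / ‖x‖` is `2 / ‖a‖`-Lipschitz at a nonzero `a`, so the
spherical projections differ by at most `2 ε³ / ε = 2 ε² ≤ 3 ε`.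
-/

section normalize

open NormedSpace

variable {E : Type*} [NormedAddCommGroup E] [NormedSpace ℝ E]

theorem norm_normalize_le_one (b : E) : ‖normalize b‖ ≤ 1 := by
  rcases eq_or_ne b 0 with rfl | hb
  · simp
  · exact (norm_normalize hb).le

theorem norm_normalize_sub_normalize_le {a : E} (ha : a ≠ 0) (b : E) :
    ‖normalize a - normalize b‖ ≤ 2 * ‖a - b‖ / ‖a‖ := by
  have ha' : 0 < ‖a‖ := norm_pos_iff.2 ha
  have rescale : ‖a‖⁻¹ • b - normalize b = (‖a‖⁻¹ * (‖b‖ - ‖a‖)) • normalize b := by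
    rw [mul_smul, sub_smul, norm_smul_normalize, smul_sub, smul_smul, inv_mul_cancel₀ ha'.ne',
      one_smul]
  calc ‖normalize a - normalize b‖
      ≤ ‖normalize a - ‖a‖⁻¹ • b‖ + ‖‖a‖⁻¹ • b - normalize b‖ :=
        norm_sub_le_norm_sub_add_norm_sub _ _ _
    _ ≤ ‖a‖⁻¹ * ‖a - b‖ + ‖a‖⁻¹ * ‖a - b‖ := by
        gcongr
        · rw [NormedSpace.normalize, ← smul_sub, norm_smul, norm_inv, norm_norm]
        · rw [rescale, norm_smul, norm_mul, norm_inv, norm_norm, Real.norm_eq_abs]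
          calc ‖a‖⁻¹ * |‖b‖ - ‖a‖| * ‖normalize b‖ ≤ ‖a‖⁻¹ * ‖a - b‖ * 1 := by
                gcongr
                · exact (abs_norm_sub_norm_le b a).trans_eq (norm_sub_rev b a)
                · exact norm_normalize_le_one b
            _ = ‖a‖⁻¹ * ‖a - b‖ := mul_one _
    _ = 2 * ‖a - b‖ / ‖a‖ := by field_simp; ring

end normalize

section projL

variable {d : ℕ} (L : Submodule ℝ (EuclideanSpace ℝ (Fin d)))

theorem projL_eq_starProjection (x : EuclideanSpace ℝ (Fin d)) :
    projL L x = L.starProjection x :=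
  rfl

theorem projL_eq_zero_iff {x : EuclideanSpace ℝ (Fin d)} : projL L x = 0 ↔ x ∈ Lᗮ :=
  L.starProjection_apply_eq_zero_iff

theorem norm_projL_sub_projL_le (x y : EuclideanSpace ℝ (Fin d)) :
    ‖projL L x - projL L y‖ ≤ ‖x - y‖ := by
  simpa only [projL_eq_starProjection, map_sub] using L.norm_starProjection_apply_le (x - y)

theorem sphProj_eq_normalize (x : EuclideanSpace ℝ (Fin d)) :
    sphProj L x = NormedSpace.normalize (projL L x) :=
  rfl

end projL

theorem sphProj_stability_general {d : ℕ} (L : Submodule ℝ (EuclideanSpace ℝ (Fin d)))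
    (ε : ℝ) (hε : 0 < ε) (hε' : ε ≤ 1 / 2)
    (u v : EuclideanSpace ℝ (Fin d))
    (huv : ‖u - v‖ ≤ ε ^ 3) (hpu : ε ≤ ‖projL L u‖) :
    ε / 2 ≤ ‖projL L v‖ ∧ v ∉ Lᗮ ∧ ‖sphProj L u - sphProj L v‖ ≤ 3 * ε := by
  have hε3 : ε ^ 3 ≤ ε / 4 := by nlinarith [mul_pos hε hε]
  have hproj : ‖projL L u - projL L v‖ ≤ ε ^ 3 := (norm_projL_sub_projL_le L u v).trans huv
  have hpv : ε / 2 ≤ ‖projL L v‖ := by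
    linarith [norm_sub_norm_le (projL L u) (projL L v)]
  refine ⟨hpv, fun hv => ?_, ?_⟩
  · rw [← projL_eq_zero_iff, ← norm_eq_zero] at hv
    linarith
  · have hpu0 : projL L u ≠ 0 := norm_pos_iff.1 (hε.trans_le hpu)
    calc ‖sphProj L u - sphProj L v‖
        ≤ 2 * ‖projL L u - projL L v‖ / ‖projL L u‖ := by
          rw [sphProj_eq_normalize, sphProj_eq_normalize]
          exact norm_normalize_sub_normalize_le hpu0 _
      _ ≤ 2 * ε ^ 3 / ε := by gcongr
      _ ≤ 3 * ε := by rw [div_le_iff₀ hε]; nlinarith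

/-- Stability of the spherical projection under perturbation of a unit vector. -/
theorem sphProj_stability {d : ℕ} (L : Submodule ℝ (EuclideanSpace ℝ (Fin d)))
    (ε : ℝ) (hε : 0 < ε) (hε' : ε ≤ 1 / 2)
    (u v : EuclideanSpace ℝ (Fin d)) (hu : ‖u‖ = 1) (hv : ‖v‖ = 1)
    (huv : ‖u - v‖ ≤ ε ^ 3) (hpu : ε ≤ ‖projL L u‖) :
    ε / 2 ≤ ‖projL L v‖ ∧ v ∉ Lᗮ ∧ ‖sphProj L u - sphProj L v‖ ≤ 3 * ε :=
  sphProj_stability_general L ε hε hε' u v huv hpu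

end
end

section
/- Let d ≥ 2 and 1 ≤ k ≤ d−1. The function Δ is a metric on the set G(d,k) of k-dimensional linear subspaces of ℝ^d: for all L, E, F ∈ G(d,k), Δ(L,E) ≥ 0 with Δ(L,E) = 0 if and only if L = E, Δ(L,E) = Δ(E,L), and Δ(L,F) ≤ Δ(L,E) + Δ(E,F). -/
open MeasureTheory Metric Matrix
open scoped RealInnerProductSpace Pointwise

noncomputable section

/-! The rotations taking `L` onto `E` form a groupoid over the Grassmannian: `1` takes `L` to
itself, transposes invert, products compose. Since `|ρ|` is the Frobenius distance from `ρ` to `1`,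
which is invariant under transposition and under left multiplication by orthogonal matrices, `Δ` is
symmetric and `|σρ| ≤ |ρ| + |σ|` gives the triangle inequality. If `Δ(L, E) = 0`, every `x ∈ L` is a
limit of points `ρx ∈ E`, so `L ≤ E`. Rotations taking `L` onto `E` exist because an isometry from
`L` onto `E` extends to the whole space and, `E` being a proper subspace, composing with the
reflection in a hyperplane containing `E` corrects the sign of its determinant. -/

open Module

section Frobenius

attribute [local instance] Matrix.frobeniusNormedAddCommGroup

variable {m n : Type*} [Fintype m] [Fintype n] {d : ℕ}

lemma frobenius_norm_eq_sqrt (A : Matrix m n ℝ) : ‖A‖ = √(∑ i, ∑ j, A i j ^ 2) := by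
  simp [frobenius_norm_def, Real.sqrt_eq_rpow]

lemma frobenius_norm_sq_eq_trace (A : Matrix m n ℝ) : ‖A‖ ^ 2 = trace (Aᵀ * A) := by
  rw [frobenius_norm_eq_sqrt, Real.sq_sqrt (by positivity), trace, Finset.sum_comm]
  simp [mul_apply, sq]

lemma frobenius_norm_orthogonal_mul [DecidableEq m] {σ : Matrix m m ℝ} (hσ : σᵀ * σ = 1)
    (A : Matrix m n ℝ) : ‖σ * A‖ = ‖A‖ := by
  rw [← sq_eq_sq₀ (norm_nonneg _) (norm_nonneg _), frobenius_norm_sq_eq_trace,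
    frobenius_norm_sq_eq_trace, transpose_mul, Matrix.mul_assoc, ← Matrix.mul_assoc σᵀ, hσ,
    Matrix.one_mul]

lemma norm_toEuclideanLin_le [DecidableEq n] (A : Matrix m n ℝ) (x : EuclideanSpace ℝ n) :
    ‖toEuclideanLin A x‖ ≤ ‖A‖ * ‖x‖ := by
  have h := frobenius_norm_mul A (replicateCol Unit x.ofLp)
  rwa [← replicateCol_mulVec, frobenius_norm_replicateCol, frobenius_norm_replicateCol,
    WithLp.toLp_ofLp, ← toLpLin_apply] at h

lemma frobNorm_eq_norm (A : Matrix (Fin d) (Fin d) ℝ) : frobNorm A = ‖A‖ :=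
  (frobenius_norm_eq_sqrt A).symm

lemma rotDist_nonneg (ρ : Matrix (Fin d) (Fin d) ℝ) : 0 ≤ rotDist ρ :=
  Real.sqrt_nonneg _

@[simp]
lemma rotDist_one : rotDist (1 : Matrix (Fin d) (Fin d) ℝ) = 0 := by
  simp [rotDist, frobNorm]

lemma rotDist_transpose (ρ : Matrix (Fin d) (Fin d) ℝ) : rotDist ρᵀ = rotDist ρ := by
  rw [rotDist, rotDist, frobNorm_eq_norm, frobNorm_eq_norm, ← frobenius_norm_transpose (ρ - 1),
    transpose_sub, transpose_one]

lemma rotDist_mul_le {σ : Matrix (Fin d) (Fin d) ℝ} (hσ : σᵀ * σ = 1)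
    (ρ : Matrix (Fin d) (Fin d) ℝ) : rotDist (σ * ρ) ≤ rotDist ρ + rotDist σ := by
  simp only [rotDist, frobNorm_eq_norm]
  calc ‖σ * ρ - 1‖ = ‖σ * (ρ - 1) + (σ - 1)‖ := by
        rw [Matrix.mul_sub, Matrix.mul_one, sub_add_sub_cancel]
    _ ≤ ‖σ * (ρ - 1)‖ + ‖σ - 1‖ := norm_add_le _ _
    _ = ‖ρ - 1‖ + ‖σ - 1‖ := by rw [frobenius_norm_orthogonal_mul hσ]

lemma norm_toEuclideanLin_sub_le (ρ : Matrix (Fin d) (Fin d) ℝ)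
    (x : EuclideanSpace ℝ (Fin d)) :
    ‖toEuclideanLin ρ x - x‖ ≤ rotDist ρ * ‖x‖ := by
  have h := norm_toEuclideanLin_le (ρ - 1) x
  rwa [map_sub, toLpLin_one, LinearMap.sub_apply, LinearMap.id_apply, ← frobNorm_eq_norm] at h

end Frobenius

section Rotations

variable {d : ℕ}

namespace IsSO

lemma one : IsSO (1 : Matrix (Fin d) (Fin d) ℝ) :=
  ⟨by rw [transpose_one, Matrix.one_mul], det_one⟩

lemma mul {σ ρ : Matrix (Fin d) (Fin d) ℝ} (hσ : IsSO σ) (hρ : IsSO ρ) : IsSO (σ * ρ) :=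
  ⟨by rw [transpose_mul, Matrix.mul_assoc, ← Matrix.mul_assoc σᵀ, hσ.1, Matrix.one_mul, hρ.1],
    by rw [det_mul, hσ.2, hρ.2, one_mul]⟩

lemma transpose {ρ : Matrix (Fin d) (Fin d) ℝ} (hρ : IsSO ρ) : IsSO ρᵀ :=
  ⟨by rw [transpose_transpose, mul_eq_one_comm.mp hρ.1], by rw [det_transpose, hρ.2]⟩

end IsSO

def rotationsOnto (L E : Submodule ℝ (EuclideanSpace ℝ (Fin d))) :
    Set (Matrix (Fin d) (Fin d) ℝ) :=
  {ρ | IsSO ρ ∧ L.map (toEuclideanLin ρ) = E}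

variable {L E F : Submodule ℝ (EuclideanSpace ℝ (Fin d))} {ρ σ : Matrix (Fin d) (Fin d) ℝ}

lemma one_mem_rotationsOnto (L : Submodule ℝ (EuclideanSpace ℝ (Fin d))) :
    1 ∈ rotationsOnto L L :=
  ⟨IsSO.one, by rw [toLpLin_one, Submodule.map_id]⟩

lemma mul_mem_rotationsOnto (hρ : ρ ∈ rotationsOnto L E) (hσ : σ ∈ rotationsOnto E F) :
    σ * ρ ∈ rotationsOnto L F :=
  ⟨hσ.1.mul hρ.1, by rw [toLpLin_mul_same, Submodule.map_comp, hρ.2, hσ.2]⟩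

lemma transpose_mem_rotationsOnto (hρ : ρ ∈ rotationsOnto L E) : ρᵀ ∈ rotationsOnto E L :=
  ⟨hρ.1.transpose, by
    rw [← hρ.2, ← Submodule.map_comp, ← toLpLin_mul_same, hρ.1.1, toLpLin_one, Submodule.map_id]⟩

end Rotations

section Transitivity

variable {V : Type*} [NormedAddCommGroup V] [InnerProductSpace ℝ V] [FiniteDimensional ℝ V]

lemma exists_linearIsometryEquiv_map_eq {L E : Submodule ℝ V}
    (h : finrank ℝ L = finrank ℝ E) :
    ∃ f : V ≃ₗᵢ[ℝ] V, L.map (f.toLinearEquiv : V →ₗ[ℝ] V) = E := by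
  let e : L ≃ₗᵢ[ℝ] E := (stdOrthonormalBasis ℝ L).repr.trans
    ((stdOrthonormalBasis ℝ E).reindex (finCongr h.symm)).repr.symm
  let f := (E.subtypeₗᵢ.comp e.toLinearIsometry).extend.toLinearIsometryEquiv rfl
  have hf : (f.toLinearEquiv : V →ₗ[ℝ] V) ∘ₗ L.subtype = E.subtype ∘ₗ e.toLinearEquiv := by
    ext x
    exact LinearIsometry.extend_apply _ x
  refine ⟨f, ?_⟩
  rw [← L.range_subtype, ← LinearMap.range_comp, hf, LinearMap.range_comp_of_range_eq_top _
    e.toLinearEquiv.range, E.range_subtype]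

lemma exists_linearIsometryEquiv_det_eq_neg_one_fixing {E : Submodule ℝ V}
    (hE : finrank ℝ E < finrank ℝ V) :
    ∃ g : V ≃ₗᵢ[ℝ] V, LinearMap.det (g.toLinearEquiv : V →ₗ[ℝ] V) = -1 ∧ ∀ x ∈ E, g x = x := by
  obtain ⟨v, hvE, hv0⟩ : ∃ v ∈ Eᗮ, v ≠ 0 := by
    refine Submodule.exists_mem_ne_zero_of_ne_bot fun h => hE.ne ?_
    rw [Submodule.orthogonal_eq_bot_iff.1 h, finrank_top]
  refine ⟨(ℝ ∙ v)ᗮ.reflection, ?_, fun x hx => ?_⟩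
  · rw [Submodule.det_reflection, Submodule.orthogonal_orthogonal, finrank_span_singleton hv0,
      pow_one]
  · exact Submodule.reflection_mem_subspace_eq_self
      (Submodule.mem_orthogonal_singleton_iff_inner_right.2
        (Submodule.inner_left_of_mem_orthogonal hx hvE))

lemma LinearIsometryEquiv.det_eq_one_or_neg_one (f : V ≃ₗᵢ[ℝ] V) :
    LinearMap.det (f.toLinearEquiv : V →ₗ[ℝ] V) = 1 ∨
      LinearMap.det (f.toLinearEquiv : V →ₗ[ℝ] V) = -1 := by
  let b := stdOrthonormalBasis ℝ V
  rw [← LinearMap.det_toMatrix b.toBasis, ← mul_self_eq_one_iff]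
  simpa [unitary] using (Matrix.det_of_mem_unitary (f.toMatrix_mem_unitaryGroup b b)).1

lemma exists_linearIsometryEquiv_det_eq_one_map_eq {L E : Submodule ℝ V}
    (h : finrank ℝ L = finrank ℝ E) (hE : finrank ℝ E < finrank ℝ V) :
    ∃ f : V ≃ₗᵢ[ℝ] V, LinearMap.det (f.toLinearEquiv : V →ₗ[ℝ] V) = 1 ∧
      L.map (f.toLinearEquiv : V →ₗ[ℝ] V) = E := by
  obtain ⟨f, hf⟩ := exists_linearIsometryEquiv_map_eq h
  rcases f.det_eq_one_or_neg_one with hdet | hdet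
  · exact ⟨f, hdet, hf⟩
  obtain ⟨g, hgdet, hgE⟩ := exists_linearIsometryEquiv_det_eq_neg_one_fixing hE
  have hgmap : E.map (g.toLinearEquiv : V →ₗ[ℝ] V) = E := by
    ext y
    refine ⟨?_, fun hy => ⟨y, hy, hgE y hy⟩⟩
    rintro ⟨x, hx, rfl⟩
    simpa [hgE x hx] using hx
  refine ⟨f.trans g, ?_, ?_⟩
  · rw [LinearIsometryEquiv.toLinearEquiv_trans, LinearEquiv.coe_trans, LinearMap.det_comp, hdet,
      hgdet, neg_one_mul, neg_neg]
  · rw [LinearIsometryEquiv.toLinearEquiv_trans, LinearEquiv.coe_trans, Submodule.map_comp, hf,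
      hgmap]

end Transitivity

lemma exists_isSO_toEuclideanLin_eq {d : ℕ}
    (f : EuclideanSpace ℝ (Fin d) ≃ₗᵢ[ℝ] EuclideanSpace ℝ (Fin d))
    (hf : LinearMap.det (f.toLinearEquiv : EuclideanSpace ℝ (Fin d) →ₗ[ℝ] _) = 1) :
    ∃ ρ, IsSO ρ ∧ toEuclideanLin ρ = (f.toLinearEquiv : EuclideanSpace ℝ (Fin d) →ₗ[ℝ] _) := by
  let b := EuclideanSpace.basisFun (Fin d) ℝ
  refine ⟨LinearMap.toMatrix b.toBasis b.toBasis f.toLinearEquiv, ⟨?_, ?_⟩, ?_⟩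
  · have h := f.toMatrix_mem_unitaryGroup b b
    rwa [mem_unitaryGroup_iff', star_eq_conjTranspose, conjTranspose_eq_transpose_of_trivial] at h
  · rwa [LinearMap.det_toMatrix]
  · rw [toEuclideanLin_eq_toLin_orthonormal, toLin_toMatrix]

section Delta

variable {d : ℕ} {L E F : Submodule ℝ (EuclideanSpace ℝ (Fin d))} {ρ : Matrix (Fin d) (Fin d) ℝ}

lemma rotationsOnto_nonempty (h : finrank ℝ L = finrank ℝ E) (hE : finrank ℝ E < d) :
    (rotationsOnto L E).Nonempty := by
  obtain ⟨f, hdet, hmap⟩ :=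
    exists_linearIsometryEquiv_det_eq_one_map_eq h (by rwa [finrank_euclideanSpace_fin])
  obtain ⟨ρ, hρ, hρf⟩ := exists_isSO_toEuclideanLin_eq f hdet
  exact ⟨ρ, hρ, by rw [hρf, hmap]⟩

lemma Delta_eq_sInf : Delta L E = sInf (rotDist '' rotationsOnto L E) := rfl

lemma bddBelow_rotDist_image (S : Set (Matrix (Fin d) (Fin d) ℝ)) : BddBelow (rotDist '' S) :=
  ⟨0, by rintro _ ⟨ρ, -, rfl⟩; exact rotDist_nonneg ρ⟩

lemma Delta_nonneg : 0 ≤ Delta L E :=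
  Real.sInf_nonneg (by rintro _ ⟨ρ, -, rfl⟩; exact rotDist_nonneg ρ)

lemma Delta_le_rotDist (hρ : ρ ∈ rotationsOnto L E) : Delta L E ≤ rotDist ρ :=
  csInf_le (bddBelow_rotDist_image _) ⟨ρ, hρ, rfl⟩

lemma Delta_self (L : Submodule ℝ (EuclideanSpace ℝ (Fin d))) : Delta L L = 0 :=
  le_antisymm (by simpa using Delta_le_rotDist (one_mem_rotationsOnto L)) Delta_nonneg

lemma Delta_comm (L E : Submodule ℝ (EuclideanSpace ℝ (Fin d))) : Delta L E = Delta E L := by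
  have key : ∀ L E : Submodule ℝ (EuclideanSpace ℝ (Fin d)),
      rotDist '' rotationsOnto L E ⊆ rotDist '' rotationsOnto E L := by
    rintro L E _ ⟨ρ, hρ, rfl⟩
    exact ⟨ρᵀ, transpose_mem_rotationsOnto hρ, rotDist_transpose ρ⟩
  rw [Delta_eq_sInf, Delta_eq_sInf, (key L E).antisymm (key E L)]

lemma Delta_triangle (hLE : (rotationsOnto L E).Nonempty) (hEF : (rotationsOnto E F).Nonempty) :
    Delta L F ≤ Delta L E + Delta E F := by
  rw [Delta_eq_sInf (L := L) (E := E), Delta_eq_sInf (L := E), ← csInf_add (hLE.image _)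
    (bddBelow_rotDist_image _) (hEF.image _) (bddBelow_rotDist_image _)]
  refine le_csInf ((hLE.image _).add (hEF.image _)) ?_
  rintro _ ⟨_, ⟨ρ, hρ, rfl⟩, _, ⟨σ, hσ, rfl⟩, rfl⟩
  exact (Delta_le_rotDist (mul_mem_rotationsOnto hρ hσ)).trans (rotDist_mul_le hσ.1.1 ρ)

lemma infDist_le_Delta_mul_norm (hLE : (rotationsOnto L E).Nonempty)
    {x : EuclideanSpace ℝ (Fin d)} (hx : x ∈ L) : infDist x E ≤ Delta L E * ‖x‖ := by
  rcases eq_or_ne x 0 with rfl | hx0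
  · simp [infDist_zero_of_mem E.zero_mem]
  rw [← div_le_iff₀ (norm_pos_iff.2 hx0)]
  refine le_csInf (hLE.image _) ?_
  rintro _ ⟨ρ, hρ, rfl⟩
  rw [div_le_iff₀ (norm_pos_iff.2 hx0)]
  have hρx : toEuclideanLin ρ x ∈ E := hρ.2 ▸ Submodule.mem_map_of_mem hx
  calc infDist x E ≤ dist x (toEuclideanLin ρ x) := infDist_le_dist_of_mem hρx
    _ = ‖toEuclideanLin ρ x - x‖ := dist_eq_norm' _ _
    _ ≤ rotDist ρ * ‖x‖ := norm_toEuclideanLin_sub_le ρ x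

lemma eq_of_Delta_eq_zero (hLE : (rotationsOnto L E).Nonempty) (h : finrank ℝ L = finrank ℝ E)
    (hΔ : Delta L E = 0) : L = E := by
  refine Submodule.eq_of_le_of_finrank_eq (fun x hx => ?_) h
  have hdist : infDist x E = 0 :=
    le_antisymm (by simpa [hΔ] using infDist_le_Delta_mul_norm hLE hx) infDist_nonneg
  exact (E.closed_of_finiteDimensional.mem_iff_infDist_zero ⟨0, E.zero_mem⟩).2 hdist

end Delta

theorem Delta_is_metric_general {d k : ℕ} (hd : 2 ≤ d) (hkd : k ≤ d - 1)
    (L E F : Submodule ℝ (EuclideanSpace ℝ (Fin d)))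
    (hL : Module.finrank ℝ L = k) (hE : Module.finrank ℝ E = k)
    (hF : Module.finrank ℝ F = k) :
    0 ≤ Delta L E ∧ (Delta L E = 0 ↔ L = E) ∧ Delta L E = Delta E L ∧
      Delta L F ≤ Delta L E + Delta E F := by
  have hk : k < d := by omega
  have hLE := rotationsOnto_nonempty (hL.trans hE.symm) (hE.trans_lt hk)
  have hEF := rotationsOnto_nonempty (hE.trans hF.symm) (hF.trans_lt hk)
  refine ⟨Delta_nonneg, ⟨eq_of_Delta_eq_zero hLE (hL.trans hE.symm), ?_⟩, Delta_comm L E,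
    Delta_triangle hLE hEF⟩
  rintro rfl
  exact Delta_self L

/-- Δ is a metric on the Grassmannian G(d,k). -/
theorem Delta_is_metric {d k : ℕ} (hd : 2 ≤ d) (hk1 : 1 ≤ k) (hkd : k ≤ d - 1)
    (L E F : Submodule ℝ (EuclideanSpace ℝ (Fin d)))
    (hL : Module.finrank ℝ L = k) (hE : Module.finrank ℝ E = k)
    (hF : Module.finrank ℝ F = k) :
    0 ≤ Delta L E ∧ (Delta L E = 0 ↔ L = E) ∧ Delta L E = Delta E L ∧
      Delta L F ≤ Delta L E + Delta E F :=
  Delta_is_metric_general hd hkd L E F hL hE hF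

end
end
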